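/- Let T0 be a balanced tree and let T1 be obtained from T0 by a right rotation of root y, where x denotes the left child of y in T0. Then T1 is balanced if and only if (γ_{T0}(x), γ_{T0}(y)) ∈ {(−1, −1), (0, −1)}. -/

import Mathlib

/-- Complete rooted planar binary trees. -/
inductive BTree where
  | leaf : BTree
  | node : BTree → BTree → BTree
  deriving DecidableEq

namespace BTree

/-- The height of a tree. -/
def ht : BTree → ℕ
  | leaf => 0
  | node l r => 1 + max l.ht r.ht

/-- The imbalance value of the root of a tree (`γ`). -/
def imb : BTree → ℤ
  | leaf => 0
  | node l r => (r.ht : ℤ) - l.ht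

/-- A tree is balanced if every node has imbalance value in {-1, 0, 1}. -/
def Balanced : BTree → Prop
  | leaf => True
  | node l r =>
      ((r.ht : ℤ) - l.ht = -1 ∨ (r.ht : ℤ) - l.ht = 0 ∨ (r.ht : ℤ) - l.ht = 1) ∧
      Balanced l ∧ Balanced r

/-- The subtree at a position (`false` = go left, `true` = go right). -/
def subtreeAt : BTree → List Bool → Option BTree
  | t, [] => some t
  | leaf, _ :: _ => none
  | node l _, false :: p => subtreeAt l p
  | node _ r, true :: p => subtreeAt r p

/-- `p` is the position of an internal node of `t`. -/
def IsNodePos (t : BTree) (p : List Bool) : Prop :=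
  ∃ l r, subtreeAt t p = some (node l r)

/-- Right rotation whose root `y` is at position `p`: the subtree
`(A ∧ B) ∧ C` at `p` is replaced by `A ∧ (B ∧ C)`. -/
inductive RotAt : BTree → List Bool → BTree → Prop
  | here (a b c : BTree) : RotAt (node (node a b) c) [] (node a (node b c))
  | left {l l' : BTree} (r : BTree) {p : List Bool} :
      RotAt l p l' → RotAt (node l r) (false :: p) (node l' r)
  | right (l : BTree) {r r' : BTree} {p : List Bool} :
      RotAt r p r' → RotAt (node l r) (true :: p) (node l r')

/-- `t₁` is obtained from `t₀` by a single right rotation (`t₀ ⋌ t₁`). -/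
def Rot (t₀ t₁ : BTree) : Prop := ∃ p, RotAt t₀ p t₁

/-- The Tamari order: reflexive transitive closure of right rotation. -/
def Tamari : BTree → BTree → Prop := Relation.ReflTransGen Rot

/-!
A rotation at `y` only replaces the subtree `(A ∧ B) ∧ C` by `A ∧ (B ∧ C)`. When both trees are
balanced the two subtrees have the same height, so the balance conditions at the ancestors of `y`
are unaffected, and balance of `T1` reduces to balance of `A ∧ (B ∧ C)`: a linear condition on
the heights of `A`, `B`, `C`, which under balance of `(A ∧ B) ∧ C` is exactly the stated one.
-/

theorem Balanced.subtreeAt {t s : BTree} {p : List Bool} (hb : Balanced t)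
    (hs : subtreeAt t p = some s) : Balanced s := by
  induction t, p using subtreeAt.induct with
  | case1 t => simp_all [BTree.subtreeAt]
  | case2 => simp [BTree.subtreeAt] at hs
  | case3 l r p ih => exact ih hb.2.1 hs
  | case4 l r p ih => exact ih hb.2.2 hs

theorem balanced_rotate_root_iff (A B C : BTree) (h : Balanced (node (node A B) C)) :
    Balanced (node A (node B C)) ↔
      ((imb (node A B), imb (node (node A B) C)) = (-1, -1) ∨
       (imb (node A B), imb (node (node A B) C)) = (0, -1)) := by
  obtain ⟨hy, ⟨hx, hA, hB⟩, hC⟩ := h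
  simp only [Balanced, ht, imb, Prod.mk.injEq] at *
  push_cast at *
  constructor
  · rintro ⟨hy', -, hx', -, -⟩
    omega
  · rintro (⟨hx', hy'⟩ | ⟨hx', hy'⟩) <;> exact ⟨by omega, hA, by omega, hB, hC⟩

theorem RotAt.ht_eq {t t' : BTree} {p : List Bool} (h : RotAt t p t')
    (h0 : Balanced t) (h1 : Balanced t') : t'.ht = t.ht := by
  induction h with
  | here a b c =>
    obtain ⟨hy, ⟨hx, -, -⟩, -⟩ := h0
    obtain ⟨hx', -, hy', -, -⟩ := h1
    simp only [ht] at *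
    omega
  | left r _ ih => simp only [ht, ih h0.2.1 h1.2.1]
  | right l _ ih => simp only [ht, ih h0.2.2 h1.2.2]

theorem RotAt.balanced_iff {t t' A B C : BTree} {p : List Bool} (h : RotAt t p t')
    (h0 : Balanced t) (hs : subtreeAt t p = some (node (node A B) C)) :
    Balanced t' ↔ Balanced (node A (node B C)) := by
  induction h with
  | here a b c =>
    simp only [subtreeAt, Option.some.injEq, node.injEq] at hs
    obtain ⟨⟨rfl, rfl⟩, rfl⟩ := hs
    rfl
  | left r hl ih =>
    rw [← ih h0.2.1 hs]
    exact ⟨fun h1 => h1.2.1, fun hl' => ⟨hl.ht_eq h0.2.1 hl' ▸ h0.1, hl', h0.2.2⟩⟩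
  | right l hr ih =>
    rw [← ih h0.2.2 hs]
    exact ⟨fun h1 => h1.2.2, fun hr' => ⟨hr.ht_eq h0.2.2 hr' ▸ h0.1, h0.2.1, hr'⟩⟩

theorem balanced_rotation_iff (T0 T1 : BTree) (p : List Bool) (A B C : BTree)
    (h0 : Balanced T0) (hrot : RotAt T0 p T1)
    (hsub : subtreeAt T0 p = some (node (node A B) C)) :
    Balanced T1 ↔
      ((imb (node A B), imb (node (node A B) C)) = (-1, -1) ∨
       (imb (node A B), imb (node (node A B) C)) = (0, -1)) :=
  (hrot.balanced_iff h0 hsub).trans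
    (balanced_rotate_root_iff A B C (h0.subtreeAt hsub))

end BTree
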